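/- Let α be a self-dual basis of F_{q^m} over F_q, let 1 ≤ k ≤ m−1, and let e be an integer with k+1 ≤ e ≤ m−1. Then dim_{F_{q^m}}(G_k(α) + G_k(α)^{⊥_e}) = max(e, m−k). -/

import Mathlib

/-- The Gabidulin code `G_k(α)`: the `F`-span of the vectors `α^{q^i}`, `i = 0, …, k-1`. -/
noncomputable def gab {F : Type*} [Field F] (q : ℕ) {m : ℕ} (k : ℕ) (α : Fin m → F) :
    Submodule F (Fin m → F) :=
  Submodule.span F (Set.range fun i : Fin k => fun j : Fin m => α j ^ q ^ (i : ℕ))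

/-- The `e`-Galois dual of a linear code `C ⊆ F^n`,
    with respect to the inner product `x ·_e y = ∑ i, x i * (y i)^(q^e)`. -/
def galoisDual {F : Type*} [Field F] (q e : ℕ) {n : ℕ} (C : Submodule F (Fin n → F)) :
    Submodule F (Fin n → F) where
  carrier := {x | ∀ c ∈ C, ∑ i, x i * c i ^ q ^ e = 0}
  add_mem' := by
    intro a b ha hb c hc
    simp only [Set.mem_setOf_eq] at *
    simp [Pi.add_apply, add_mul, Finset.sum_add_distrib, ha c hc, hb c hc]
  zero_mem' := by
    intro c hc
    simp
  smul_mem' := by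
    intro r a ha c hc
    simp only [Set.mem_setOf_eq] at *
    simp [Pi.smul_apply, smul_eq_mul, mul_assoc, ← Finset.mul_sum, ha c hc]


/-! For a self-dual basis `α` the Moore matrix `M = (α_j ^ q ^ s)_{s,j}` is orthogonal: the entries
of `Mᵀ * M` are `∑_s (α_i α_j) ^ q ^ s = Tr(α_i α_j) = δ_ij`. So its rows `v_s = α ^ q ^ s` form a
basis of `F^m` in which the coordinates of `x` are the dot products `x ⬝ᵥ v_s`. As `x ↦ x ^ q ^ m`
is the identity, `v_i ^ q ^ e = v_{(i + e) % m}`; hence `G_k(α)` is spanned by `v_0, …, v_{k-1}`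
and its `e`-Galois dual by the `v_s` with `s` outside the window `{(i + e) % m | i < k}`. For
`k ≤ e < m` the part of this window not below `k` is `{e, …, min (e + k) m - 1}`, so the sum is
spanned by all but `min k (m - e)` of the basis vectors.
-/

open Matrix Module Submodule Finset

theorem mem_galoisDual_span_iff {F : Type*} [Field F] {q e n : ℕ}
    (hadd : ∀ y z : F, (y + z) ^ q ^ e = y ^ q ^ e + z ^ q ^ e)
    {s : Set (Fin n → F)} {x : Fin n → F} :
    x ∈ galoisDual q e (span F s) ↔ ∀ c ∈ s, ∑ i, x i * c i ^ q ^ e = 0 := by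
  refine ⟨fun hx c hc => hx c (subset_span hc), fun hx c hc => ?_⟩
  induction hc using span_induction with
  | mem c hc => exact hx c hc
  | zero =>
    have h0 : (0 : F) ^ q ^ e = 0 := by simpa using hadd 0 0
    simp [h0]
  | add c d _ _ hc hd =>
    simp only [Pi.add_apply, hadd, mul_add, sum_add_distrib, hc, hd, add_zero]
  | smul a c _ hc =>
    simp only [Pi.smul_apply, smul_eq_mul, mul_pow, mul_left_comm _ (a ^ q ^ e), ← mul_sum, hc,
      mul_zero]

theorem pow_pow_mod_eq_pow_pow {F : Type*} [Field F] [Fintype F] {q m : ℕ}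
    (hF : Fintype.card F = q ^ m) (y : F) (a : ℕ) : y ^ q ^ (a % m) = y ^ q ^ a := by
  rw [← Nat.mod_add_div a m, pow_add, pow_mul q m, ← hF, pow_mul, FiniteField.pow_card_pow,
    Nat.mod_add_div]

namespace Matrix

variable {ι R : Type*} [Fintype ι] [DecidableEq ι] [CommRing R] {M : Matrix ι ι R}

noncomputable def rowBasis (hM : M * Mᵀ = 1) : Basis ι R (ι → R) :=
  .ofEquivFun <| .ofLinearMap (mulVecLin M) (mulVecLin Mᵀ)
    (by rw [← mulVecLin_mul, hM, mulVecLin_one])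
    (by rw [← mulVecLin_mul, mul_eq_one_comm.mp hM, mulVecLin_one])

@[simp]
theorem coe_rowBasis (hM : M * Mᵀ = 1) : ⇑(rowBasis hM) = M := by
  ext i j
  simp [rowBasis]

theorem rowBasis_repr_apply (hM : M * Mᵀ = 1) (x : ι → R) (i : ι) :
    (rowBasis hM).repr x i = x ⬝ᵥ M i := by
  simp [rowBasis, mulVec, dotProduct_comm]

end Matrix

theorem Module.Basis.finrank_span_image {ι R V : Type*} [DivisionRing R] [AddCommGroup V]
    [Module R V] (b : Basis ι R V) (s : Set ι) [Fintype s] :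
    finrank R (span R (b '' s)) = Fintype.card s := by
  rw [← finrank_span_eq_card (b.linearIndependent.comp _ Subtype.val_injective), Set.range_comp,
    Subtype.range_coe]

def mooreMatrix {F : Type*} [Field F] (q : ℕ) {m : ℕ} (α : Fin m → F) : Matrix (Fin m) (Fin m) F :=
  Matrix.of fun s j => α j ^ q ^ (s : ℕ)

theorem gab_eq_span_rowBasis {F : Type*} [Field F] {q m k : ℕ} {α : Fin m → F}
    (hM : mooreMatrix q α * (mooreMatrix q α)ᵀ = 1) (hkm : k ≤ m) :
    gab q k α = span F (rowBasis hM '' {s | (s : ℕ) < k}) := by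
  rw [← Fin.range_castLE hkm, ← Set.range_comp, coe_rowBasis]
  rfl

section FiniteField

variable {K F : Type*} [Field K] [Field F] [Fintype K] [Algebra K F]

theorem add_pow_card_pow (e : ℕ) (y z : F) :
    (y + z) ^ Fintype.card K ^ e = y ^ Fintype.card K ^ e + z ^ Fintype.card K ^ e := by
  simpa [AlgHom.coe_pow, FiniteField.coe_frobeniusAlgHom, pow_iterate] using
    map_add (FiniteField.frobeniusAlgHom K F ^ e) y z

variable [Fintype F] {m : ℕ} {α : Fin m → F}

theorem mooreMatrix_mul_transpose_self (hm : finrank K F = m)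
    (hsd : ∀ i j, Algebra.trace K F (α i * α j) = if i = j then 1 else 0) :
    mooreMatrix (Fintype.card K) α * (mooreMatrix (Fintype.card K) α)ᵀ = 1 := by
  refine mul_eq_one_comm.mp (ext fun i j => ?_)
  have htr := FiniteField.algebraMap_trace_eq_sum_pow K F (α i * α j)
  rw [hsd, hm, Nat.card_eq_fintype_card, ← Fin.sum_univ_eq_sum_range] at htr
  simp only [mul_apply, transpose_apply, mooreMatrix, of_apply, ← mul_pow, ← htr, one_apply]
  split_ifs <;> simp

theorem mem_galoisDual_gab_iff (hF : Fintype.card F = Fintype.card K ^ m) {k e : ℕ}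
    {x : Fin m → F} :
    x ∈ galoisDual (Fintype.card K) e (gab (Fintype.card K) k α) ↔
      ∀ i < k, ∑ j, x j * α j ^ Fintype.card K ^ ((i + e) % m) = 0 := by
  simp only [gab, mem_galoisDual_span_iff (add_pow_card_pow (K := K) e), Set.forall_mem_range,
    ← pow_mul, ← pow_add, pow_pow_mod_eq_pow_pow hF, Fin.forall_iff]

theorem galoisDual_gab_eq_span_rowBasis (hF : Fintype.card F = Fintype.card K ^ m) (hm : 0 < m)
    (hM : mooreMatrix (Fintype.card K) α * (mooreMatrix (Fintype.card K) α)ᵀ = 1) {k e : ℕ} :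
    galoisDual (Fintype.card K) e (gab (Fintype.card K) k α) =
      span F (rowBasis hM '' {s | ∀ i < k, (i + e) % m ≠ s}) := by
  ext x
  have hrepr (s : Fin m) : (rowBasis hM).repr x s = ∑ j, x j * α j ^ Fintype.card K ^ (s : ℕ) :=
    rowBasis_repr_apply hM x s
  rw [mem_galoisDual_gab_iff hF, (rowBasis hM).mem_span_image]
  constructor
  · rintro h s hs i hi his
    exact Finsupp.mem_support_iff.mp hs ((hrepr s).trans (his ▸ h i hi))
  · intro h i hi
    by_contra hne
    exact h (Finsupp.mem_support_iff.mpr ((hrepr ⟨_, Nat.mod_lt _ hm⟩).trans_ne hne)) i hi rfl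

end FiniteField

theorem Nat.exists_add_mod_eq_iff {m k e s : ℕ} (hke : k ≤ e) (hem : e < m) (hs : s < m)
    (hks : k ≤ s) : (∃ i < k, (i + e) % m = s) ↔ e ≤ s ∧ s < e + k := by
  constructor
  · rintro ⟨i, hi, rfl⟩
    rw [Nat.add_mod_eq_ite, Nat.mod_eq_of_lt (by omega : i < m), Nat.mod_eq_of_lt hem] at hks ⊢
    split_ifs at hks ⊢ <;> omega
  · rintro ⟨hes, hse⟩
    exact ⟨s - e, by omega, by rw [Nat.sub_add_cancel hes, Nat.mod_eq_of_lt hs]⟩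

theorem card_filter_lt_or_forall_add_mod_ne {m k e : ℕ} (hke : k ≤ e) (hem : e < m) :
    #{s : Fin m | (s : ℕ) < k ∨ ∀ i < k, (i + e) % m ≠ s} = max e (m - k) := by
  have hcompl : (univ.filter fun s : Fin m => (s : ℕ) < k ∨ ∀ i < k, (i + e) % m ≠ s)ᶜ =
      (univ.filter fun s : Fin m => (s : ℕ) < e + k) \ univ.filter fun s => (s : ℕ) < e := by
    ext s
    simp only [mem_compl, mem_filter, mem_univ, true_and, mem_sdiff, not_or, not_forall, not_not,
      not_lt, exists_prop]
    by_cases hks : k ≤ (s : ℕ)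
    · rw [Nat.exists_add_mod_eq_iff hke hem s.isLt hks]
      omega
    · omega
  have hsub :
      (univ.filter fun s : Fin m => (s : ℕ) < e) ⊆ univ.filter fun s => (s : ℕ) < e + k := by
    intro s
    simp only [mem_filter, mem_univ, true_and]
    omega
  rw [← compl_compl (filter _ _), card_compl, hcompl, card_sdiff_of_subset hsub,
    Fin.card_filter_val_lt, Fin.card_filter_val_lt, Fintype.card_fin]
  omega

theorem finrank_sup_gab_galoisDual_of_gt_general
    (q m : ℕ)
    (K F : Type) [Field K] [Field F] [Algebra K F] [Fintype K] [Fintype F]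
    (hK : Fintype.card K = q) (hF : Fintype.card F = q ^ m)
    (α : Fin m → F)
    (hsd : ∀ i j, Algebra.trace K F (α i * α j) = if i = j then 1 else 0)
    (k e : ℕ) (he1 : k + 1 ≤ e) (he2 : e ≤ m - 1) :
    Module.finrank F ↥(gab q k α ⊔ galoisDual q e (gab q k α)) = max e (m - k) := by
  subst hK
  have hfin : finrank K F = m := by
    rw [Module.card_eq_pow_finrank (K := K) (V := F)] at hF
    exact Nat.pow_right_injective Fintype.one_lt_card hF
  have hM := mooreMatrix_mul_transpose_self hfin hsd
  rw [galoisDual_gab_eq_span_rowBasis hF (by omega) hM, gab_eq_span_rowBasis hM (by omega),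
    ← span_union, ← Set.image_union, ← Set.ofPred_or, (rowBasis hM).finrank_span_image,
    Fintype.card_ofFinset]
  exact card_filter_lt_or_forall_add_mod_ne (by omega) (by omega)

/-- For a self-dual basis `α`, `1 ≤ k ≤ m-1` and `k+1 ≤ e ≤ m-1`,
`dim (G_k(α) + G_k(α)^{⊥_e}) = max e (m - k)`. -/
theorem finrank_sup_gab_galoisDual_of_gt
    (q m : ℕ) (hq : IsPrimePow q) (hm : 0 < m)
    (K F : Type) [Field K] [Field F] [Algebra K F] [Fintype K] [Fintype F]
    (hK : Fintype.card K = q) (hF : Fintype.card F = q ^ m)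
    (α : Fin m → F) (hα : ∃ b : Module.Basis (Fin m) K F, ⇑b = α)
    (hsd : ∀ i j, Algebra.trace K F (α i * α j) = if i = j then 1 else 0)
    (k e : ℕ) (hk1 : 1 ≤ k) (hk2 : k ≤ m - 1) (he1 : k + 1 ≤ e) (he2 : e ≤ m - 1) :
    Module.finrank F ↥(gab q k α ⊔ galoisDual q e (gab q k α)) = max e (m - k) :=
  finrank_sup_gab_galoisDual_of_gt_general q m K F hK hF α hsd k e he1 he2
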